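/- Suppose τ₀, τ₁, τ₂ ∈ H satisfy ⟨τ₀,τ₀⟩ = ⟨τ₁,τ₁⟩ = ⟨τ₂,τ₂⟩ = 1/3 and ⟨Φ₀₁, Φ₁₀⟩ = 0. Then ⟨τ₁, τ₂⟩ = ω/3, and consequently τ₂ = ω τ₁. -/

import Mathlib

open scoped BigOperators ComplexConjugate

variable {H : Type*} [NormedAddCommGroup H] [InnerProductSpace ℂ H]

/-- The primitive cube root of unity `ω = e^{2πi/3}`. -/
noncomputable def ω : ℂ := Complex.exp (2 * Real.pi * Complex.I / 3)

/-- `|v_j⟩ = (1/√3)(i|0⟩ + ω^{-j}|1⟩ + ω^{-2j}|2⟩)` in `ℂ³`. -/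
noncomputable def v (j : Fin 3) : Fin 3 → ℂ := fun k =>
  ((Real.sqrt 3 : ℂ))⁻¹ * (if k = 0 then Complex.I else ω ^ (-((j : ℕ) * (k : ℕ) : ℤ)))

/-- `|v_j'⟩ = (1/√3)(|0⟩ + ω^{-j}|1⟩ + i ω^{-2j}|2⟩)` in `ℂ³`. -/
noncomputable def v' (j : Fin 3) : Fin 3 → ℂ := fun k =>
  ((Real.sqrt 3 : ℂ))⁻¹ * (if k = 2 then Complex.I else 1) * ω ^ (-((j : ℕ) * (k : ℕ) : ℤ))

/-- The inner product on `ℂ³ ⊗ H`, viewed as triples of elements of `H`: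
`⟨x, y⟩ = ∑ₖ ⟨xₖ, yₖ⟩` (conjugate-linear in the first argument). -/
noncomputable def ip (x y : Fin 3 → H) : ℂ := ∑ k, (inner ℂ (x k) (y k) : ℂ)

/-- `Φ₀₀ = √2 [ |v₀⟩⊗τ₀ − ½|v₁⟩⊗τ₁ − ½|v₂⟩⊗τ₂ ]` in `ℂ³ ⊗ H`. -/
noncomputable def Phi00 (τ₀ τ₁ τ₂ : H) : Fin 3 → H := fun k =>
  (Real.sqrt 2 : ℂ) • (v 0 k • τ₀ - ((1/2 : ℂ) * v 1 k) • τ₁ - ((1/2 : ℂ) * v 2 k) • τ₂)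

/-- `Φ₀₁ = √2 [ −(√3/2)|v₁'⟩⊗τ₁ + (√3/2)|v₂'⟩⊗τ₂ ]` in `ℂ³ ⊗ H`. -/
noncomputable def Phi01 (τ₁ τ₂ : H) : Fin 3 → H := fun k =>
  (Real.sqrt 2 : ℂ) • ((-((Real.sqrt 3 : ℂ) / 2) * v' 1 k) • τ₁ +
    (((Real.sqrt 3 : ℂ) / 2) * v' 2 k) • τ₂)

/-- `Φ₁₀ = √2 [ (√3/2)|v₁⟩⊗τ₁ − (√3/2)|v₂⟩⊗τ₂ ]` in `ℂ³ ⊗ H`. -/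
noncomputable def Phi10 (τ₁ τ₂ : H) : Fin 3 → H := fun k =>
  (Real.sqrt 2 : ℂ) • ((((Real.sqrt 3 : ℂ) / 2) * v 1 k) • τ₁ -
    (((Real.sqrt 3 : ℂ) / 2) * v 2 k) • τ₂)

/-- `Φ₁₁ = √2 [ |v₀'⟩⊗τ₀ − ½|v₁'⟩⊗τ₁ − ½|v₂'⟩⊗τ₂ ]` in `ℂ³ ⊗ H`. -/
noncomputable def Phi11 (τ₀ τ₁ τ₂ : H) : Fin 3 → H := fun k =>
  (Real.sqrt 2 : ℂ) • (v' 0 k • τ₀ - ((1/2 : ℂ) * v' 1 k) • τ₁ - ((1/2 : ℂ) * v' 2 k) • τ₂)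

/-!
Expanding `⟨Φ₀₁, Φ₁₀⟩` sesquilinearly expresses it through the Gram entries `⟨v'_j, v_l⟩`
and `z = ⟨τ₁, τ₂⟩`, so the hypothesis becomes a real-linear equation in `z`. Writing
`z = ω w` makes its coefficients real, `(1 - √3) w + (1 + √3) w̄ = 2/3`, whose only solution is
`w = 1/3`. Then `‖τ₂ - ω τ₁‖² = ⟨τ₂, τ₂⟩ - 2 Re (ω̄ z) + ⟨τ₁, τ₁⟩ = 0`.
-/

open Complex
open scoped InnerProductSpace

theorem eq_smul_of_inner_eq_mul {𝕜 E : Type*} [RCLike 𝕜] [NormedAddCommGroup E]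
    [InnerProductSpace 𝕜 E] {x y : E} {u c : 𝕜} (hu : ‖u‖ = 1) (hx : ⟪x, x⟫_𝕜 = c)
    (hy : ⟪y, y⟫_𝕜 = c) (hxy : ⟪x, y⟫_𝕜 = u * c) : y = u • x := by
  have hyx : ⟪y, x⟫_𝕜 = conj u * c := by
    rw [← inner_conj_symm, hxy, map_mul, ← hx, inner_conj_symm]
  have hu' : conj u * u = 1 := by rw [RCLike.conj_mul, hu, RCLike.ofReal_one, one_pow]
  rw [← sub_eq_zero, ← inner_self_eq_zero (𝕜 := 𝕜)]
  simp only [inner_sub_left, inner_sub_right, inner_smul_left, inner_smul_right, hx, hy,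
    hxy, hyx]
  linear_combination (-c) * hu'

lemma isPrimitiveRoot_ω : IsPrimitiveRoot ω 3 := by
  simpa only [ω, Nat.cast_ofNat] using Complex.isPrimitiveRoot_exp 3 (by norm_num)

lemma ω_pow_three : ω ^ 3 = 1 := isPrimitiveRoot_ω.pow_eq_one

lemma norm_ω : ‖ω‖ = 1 := isPrimitiveRoot_ω.norm'_eq_one (by norm_num)

lemma ω_mul_conj : ω * conj ω = 1 := by
  rw [Complex.mul_conj, Complex.normSq_eq_norm_sq, norm_ω, one_pow, Complex.ofReal_one]

lemma conj_ω : conj ω = ω ^ 2 := by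
  rw [← Complex.inv_eq_conj norm_ω]
  exact inv_eq_of_mul_eq_one_right (by rw [← pow_succ', ω_pow_three])

lemma ω_zpow_neg_mul (m n : ℕ) : ω ^ (-((m : ℤ) * n)) = conj ω ^ (m * n) := by
  rw [← Nat.cast_mul, zpow_neg, zpow_natCast, ← inv_pow, Complex.inv_eq_conj norm_ω]

lemma ω_eq_neg_half_add_mul_I : ω = -1 / 2 + (Real.sqrt 3 / 2) * I := by
  have h : 2 * Real.pi * I / 3 = ((Real.pi - Real.pi / 3 : ℝ) : ℂ) * I := by
    push_cast; ring
  rw [ω, h, Complex.exp_mul_I, ← Complex.ofReal_cos, ← Complex.ofReal_sin,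
    Real.cos_pi_sub, Real.sin_pi_sub, Real.cos_pi_div_three, Real.sin_pi_div_three]
  push_cast; ring

lemma I_mul_ω_sub_ω_sq : I * (ω - ω ^ 2) = -Real.sqrt 3 := by
  have h : conj ω = -1 / 2 - (Real.sqrt 3 / 2) * I := by
    rw [ω_eq_neg_half_add_mul_I]
    simp only [map_add, map_mul, map_div₀, map_neg, map_one, map_ofNat, Complex.conj_ofReal,
      Complex.conj_I]
    ring
  rw [← conj_ω, h, ω_eq_neg_half_add_mul_I]
  linear_combination (Real.sqrt 3 : ℂ) * I_sq

lemma star_v'_dotProduct_v (j l : Fin 3) :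
    star (v' j) ⬝ᵥ v l =
      (I + ω ^ (j : ℕ) * conj ω ^ (l : ℕ) - I * ω ^ (2 * j : ℕ) * conj ω ^ (2 * l : ℕ)) / 3 := by
  have h3 : ((Real.sqrt 3 : ℂ))⁻¹ ^ 2 = 1 / 3 := by
    rw [inv_pow, ← Complex.ofReal_pow, Real.sq_sqrt (by norm_num)]; norm_num
  simp only [dotProduct, Fin.sum_univ_three, v, v', ω_zpow_neg_mul, Pi.star_apply, star_mul',
    Fin.isValue, Fin.val_zero, Fin.val_one, Fin.val_two, mul_zero, mul_one, pow_zero, if_true,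
    star_inv₀, Complex.star_def, Complex.conj_ofReal, map_pow, Complex.conj_conj, Complex.conj_I,
    map_one, Fin.reduceEq, if_false]
  linear_combination
    (I + ω ^ (j : ℕ) * conj ω ^ (l : ℕ) - I * ω ^ (2 * j : ℕ) * conj ω ^ (2 * l : ℕ)) * h3

lemma star_v'_dotProduct_v_self (j : Fin 3) : star (v' j) ⬝ᵥ v j = 1 / 3 := by
  simp only [star_v'_dotProduct_v, mul_assoc, ← mul_pow, ω_mul_conj, one_pow]
  ring

lemma star_v'_one_dotProduct_v_two : star (v' 1) ⬝ᵥ v 2 = (I + ω ^ 2 - I * ω) / 3 := by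
  simp only [star_v'_dotProduct_v, conj_ω, Fin.val_one, Fin.val_two]
  linear_combination (ω ^ 2 - I * ω * (ω ^ 6 + ω ^ 3 + 1)) / 3 * ω_pow_three

lemma star_v'_two_dotProduct_v_one : star (v' 2) ⬝ᵥ v 1 = (I + ω - I * ω ^ 2) / 3 := by
  simp only [star_v'_dotProduct_v, conj_ω, Fin.val_one, Fin.val_two]
  linear_combination (ω - I * ω ^ 2 * (ω ^ 3 + 1)) / 3 * ω_pow_three

lemma ip_Phi01_Phi10 (τ₁ τ₂ : H) :
    ip (Phi01 τ₁ τ₂) (Phi10 τ₁ τ₂) =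
      3 / 2 * (-(star (v' 1) ⬝ᵥ v 1) * ⟪τ₁, τ₁⟫_ℂ + (star (v' 1) ⬝ᵥ v 2) * ⟪τ₁, τ₂⟫_ℂ
        + (star (v' 2) ⬝ᵥ v 1) * ⟪τ₂, τ₁⟫_ℂ - (star (v' 2) ⬝ᵥ v 2) * ⟪τ₂, τ₂⟫_ℂ) := by
  have h2 : ((Real.sqrt 2 : ℂ)) ^ 2 = 2 := by
    exact_mod_cast Real.sq_sqrt (by norm_num : (0 : ℝ) ≤ 2)
  have h3 : ((Real.sqrt 3 : ℂ)) ^ 2 = 3 := by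
    exact_mod_cast Real.sq_sqrt (by norm_num : (0 : ℝ) ≤ 3)
  simp only [ip, Phi01, Phi10, dotProduct, Fin.sum_univ_three, inner_smul_left, inner_smul_right,
    inner_add_left, inner_sub_right, Pi.star_apply, Complex.star_def, map_mul, map_neg, map_div₀,
    Complex.conj_ofReal, map_ofNat]
  ring_nf
  simp only [h2, h3]
  ring

lemma eq_one_div_three_of_combination_conj {w : ℂ}
    (h : (1 - Real.sqrt 3) * w + (1 + Real.sqrt 3) * conj w = 2 / 3) : w = 1 / 3 := by
  have hre := congrArg Complex.re h
  have him := congrArg Complex.im h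
  simp only [add_re, mul_re, sub_re, one_re, ofReal_re, sub_im, one_im, ofReal_im, sub_self,
    zero_mul, sub_zero, conj_re, add_im, add_zero, conj_im, mul_neg, neg_zero, div_ofNat_re,
    re_ofNat, mul_im, div_ofNat_im, im_ofNat, zero_div] at hre him
  have hw_re : w.re = 1 / 3 := by linarith
  have hw_im : Real.sqrt 3 * w.im = 0 := by linarith
  rw [mul_eq_zero, or_iff_right (Real.sqrt_pos.2 three_pos).ne'] at hw_im
  exact Complex.ext (by simp [hw_re]) (by simp [hw_im])

lemma eq_ω_div_three_of_eq {z : ℂ}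
    (h : (I + ω ^ 2 - I * ω) * z + (I + ω - I * ω ^ 2) * conj z = 2 / 3) : z = ω / 3 := by
  obtain ⟨w, rfl⟩ : ∃ w, z = ω * w := ⟨conj ω * z, by rw [← mul_assoc, ω_mul_conj, one_mul]⟩
  rw [map_mul, conj_ω] at h
  have hw : w = 1 / 3 := eq_one_div_three_of_combination_conj (by
    linear_combination h + (-w - conj w + I * ω * conj w) * ω_pow_three
      + (conj w - w) * I_mul_ω_sub_ω_sq)
  rw [hw]
  ring

theorem tau_two_eq_omega_tau_one_general {H : Type*} [NormedAddCommGroup H] [InnerProductSpace ℂ H]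
    (τ₁ τ₂ : H)
    (h1 : (inner ℂ τ₁ τ₁ : ℂ) = 1/3)
    (h2 : (inner ℂ τ₂ τ₂ : ℂ) = 1/3)
    (horth : ip (Phi01 τ₁ τ₂) (Phi10 τ₁ τ₂) = 0) :
    (inner ℂ τ₁ τ₂ : ℂ) = ω / 3 ∧ τ₂ = ω • τ₁ := by
  have hexp := ip_Phi01_Phi10 τ₁ τ₂
  rw [horth, star_v'_dotProduct_v_self, star_v'_dotProduct_v_self, star_v'_one_dotProduct_v_two,
    star_v'_two_dotProduct_v_one, h1, h2, ← inner_conj_symm τ₂ τ₁] at hexp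
  have hinner : ⟪τ₁, τ₂⟫_ℂ = ω / 3 := eq_ω_div_three_of_eq (by linear_combination -2 * hexp)
  exact ⟨hinner, eq_smul_of_inner_eq_mul norm_ω h1 h2 (by rw [hinner]; ring)⟩

/-- If `⟨τ₀,τ₀⟩ = ⟨τ₁,τ₁⟩ = ⟨τ₂,τ₂⟩ = 1/3` and `⟨Φ₀₁,Φ₁₀⟩ = 0`, then
`⟨τ₁,τ₂⟩ = ω/3`, and consequently `τ₂ = ω τ₁`. -/
theorem tau_two_eq_omega_tau_one {H : Type*} [NormedAddCommGroup H] [InnerProductSpace ℂ H]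
    (τ₀ τ₁ τ₂ : H)
    (h0 : (inner ℂ τ₀ τ₀ : ℂ) = 1/3) (h1 : (inner ℂ τ₁ τ₁ : ℂ) = 1/3)
    (h2 : (inner ℂ τ₂ τ₂ : ℂ) = 1/3)
    (horth : ip (Phi01 τ₁ τ₂) (Phi10 τ₁ τ₂) = 0) :
    (inner ℂ τ₁ τ₂ : ℂ) = ω / 3 ∧ τ₂ = ω • τ₁ :=
  tau_two_eq_omega_tau_one_general τ₁ τ₂ h1 h2 horth
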